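/- arXiv:1012.3597 — 2 statements merged into one kernel-verified Lean document; each statement's English description precedes it below -/
import Mathlib

section
/- (Surface quasi-geostrophic stretching identity.) Let u = (u₁, u₂) be a smooth divergence-free velocity field on ℝ × ℝ² and let θ be a smooth scalar field with ∂ₜθ + u·∇θ = 0 at every point. Then the two-dimensional vector field B = (−∂θ/∂y, ∂θ/∂x) (a rotation of ∇θ by 90°) satisfies the same stretching equation as three-dimensional vorticity: ∂ₜB + (u·∇)B = (B·∇)u at every point. -/
open scoped BigOperators
open Matrix

noncomputable section

/-- Points of `ℝ²`. -/
abbrev V2 := Fin 2 → ℝ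

/-- Spatial partial derivative `∂f/∂xᵢ` of a scalar field on `ℝ²`. -/
def pd2 (i : Fin 2) (f : V2 → ℝ) (x : V2) : ℝ := fderiv ℝ f x (Pi.single i 1)

/-- Spatial gradient `∇f` in `ℝ²`. -/
def grad2 (f : V2 → ℝ) (x : V2) : V2 := fun i => pd2 i f x

/-- Spatial divergence in `ℝ²`. -/
def div2 (u : V2 → V2) (x : V2) : ℝ := ∑ i, pd2 i (fun y => u y i) x

/-- Directional derivative `(v·∇)w` in `ℝ²`. -/
def adv2 (v : V2) (w : V2 → V2) (x : V2) : V2 := fun i => ∑ j, v j * pd2 j (fun y => w y i) x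

/-- Time derivative of a time-dependent scalar field on `ℝ²`. -/
def dts2 (f : ℝ → V2 → ℝ) (t : ℝ) (x : V2) : ℝ := deriv (fun s => f s x) t

/-- Time derivative of a time-dependent vector field on `ℝ²`. -/
def dtv2 (u : ℝ → V2 → V2) (t : ℝ) (x : V2) : V2 := fun i => deriv (fun s => u s x i) t

/-- Smoothness (C∞ jointly in time and space) of a scalar field on `ℝ²`. -/
def SmoothS2 (f : ℝ → V2 → ℝ) : Prop := ContDiff ℝ (⊤ : ℕ∞) (fun q : ℝ × V2 => f q.1 q.2)

/-- Smoothness (C∞ jointly in time and space) of a vector field on `ℝ²`. -/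
def SmoothV2 (u : ℝ → V2 → V2) : Prop := ContDiff ℝ (⊤ : ℕ∞) (fun q : ℝ × V2 => u q.1 q.2)

/-- Time direction in `ℝ × ℝ²`. -/
def etd : ℝ × V2 := (1, 0)

/-- Spatial coordinate directions in `ℝ × ℝ²`. -/
def Ed (j : Fin 2) : ℝ × V2 := (0, Pi.single j 1)

lemma dd_smooth {F : ℝ × V2 → ℝ} (hF : ContDiff ℝ (⊤ : ℕ∞) F) (w : ℝ × V2) :
    ContDiff ℝ (⊤ : ℕ∞) (fun q => fderiv ℝ F q w) :=
  (hF.fderiv_right (by simp)).clm_apply contDiff_const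

lemma dd_symm {F : ℝ × V2 → ℝ} (hF : ContDiff ℝ (⊤ : ℕ∞) F) (q : ℝ × V2) (v w : ℝ × V2) :
    fderiv ℝ (fun p => fderiv ℝ F p v) q w = fderiv ℝ (fun p => fderiv ℝ F p w) q v := by
  have hd : ContDiff ℝ (⊤ : ℕ∞) (fderiv ℝ F) := hF.fderiv_right (by simp)
  have key : ∀ z z', fderiv ℝ (fun p => fderiv ℝ F p z) q z'
      = (fderiv ℝ (fderiv ℝ F) q z') z := by
    intro z z'
    rw [fderiv_clm_apply (hd.differentiable (by simp) q) (differentiableAt_const z)]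
    simp
  rw [key, key]
  exact second_derivative_symmetric
    (fun y => (hF.differentiable (by simp) y).hasFDerivAt)
    ((hd.differentiable (by simp) q).hasFDerivAt) w v

lemma tslice {F : ℝ × V2 → ℝ} (hF : ContDiff ℝ (⊤ : ℕ∞) F) (t : ℝ) (x : V2) :
    deriv (fun s => F (s, x)) t = fderiv ℝ F (t, x) etd := by
  have h1 : HasDerivAt (fun s : ℝ => (s, x)) ((1 : ℝ), (0 : V2)) t :=
    (hasDerivAt_id t).prodMk (hasDerivAt_const t x)
  exact ((hF.differentiable (by simp) (t, x)).hasFDerivAt.comp_hasDerivAt t h1).deriv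

lemma xslice {F : ℝ × V2 → ℝ} (hF : ContDiff ℝ (⊤ : ℕ∞) F) (t : ℝ) (x : V2) (v : V2) :
    fderiv ℝ (fun y => F (t, y)) x v = fderiv ℝ F (t, x) (0, v) := by
  have h1 : HasFDerivAt (fun y : V2 => ((t : ℝ), y))
      ((0 : V2 →L[ℝ] ℝ).prod (ContinuousLinearMap.id ℝ V2)) x :=
    (hasFDerivAt_const t x).prodMk (hasFDerivAt_id x)
  have h2 := ((hF.differentiable (by simp) (t, x)).hasFDerivAt.comp x h1).fderiv
  have h3 : (fun y => F (t, y)) = F ∘ Prod.mk t := rfl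
  rw [h3, h2]; rfl

/-- surface quasi-geostrophic stretching identity: `B = ∇⊥θ`
satisfies the 3D-vorticity stretching equation. -/
theorem stmt9
    (u : ℝ → V2 → V2) (θ : ℝ → V2 → ℝ)
    (hu : SmoothV2 u) (hθ : SmoothS2 θ)
    (hdiv : ∀ t x, div2 (u t) x = 0)
    (hθt : ∀ t x, dts2 θ t x + u t x ⬝ᵥ grad2 (θ t) x = 0)
    (B : ℝ → V2 → V2)
    (hB : ∀ t x, B t x = ![-pd2 1 (θ t) x, pd2 0 (θ t) x]) :
    ∀ t x, dtv2 B t x + adv2 (u t x) (B t) x = adv2 (B t x) (u t) x := by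
  have hθ' : ContDiff ℝ (⊤ : ℕ∞) (fun p : ℝ × V2 => θ p.1 p.2) := hθ
  have hu' : ∀ k, ContDiff ℝ (⊤ : ℕ∞) (fun p : ℝ × V2 => u p.1 p.2 k) := fun k =>
    contDiff_pi.mp hu k
  -- pd2 of θ-slices in joint form
  have c1 : ∀ (s : ℝ) (y : V2) (j : Fin 2),
      pd2 j (θ s) y = fderiv ℝ (fun p : ℝ × V2 => θ p.1 p.2) (s, y) (Ed j) :=
    fun s y j => xslice hθ' s y (Pi.single j 1)
  -- pd2 of u-slices in joint form
  have c2 : ∀ (s : ℝ) (y : V2) (i j : Fin 2),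
      pd2 j (fun z => u s z i) y = fderiv ℝ (fun p : ℝ × V2 => u p.1 p.2 i) (s, y) (Ed j) :=
    fun s y i j => xslice (hu' i) s y (Pi.single j 1)
  -- transport equation in joint form
  have transport : ∀ p : ℝ × V2,
      fderiv ℝ (fun p : ℝ × V2 => θ p.1 p.2) p etd
        + (u p.1 p.2 0 * fderiv ℝ (fun p : ℝ × V2 => θ p.1 p.2) p (Ed 0)
          + u p.1 p.2 1 * fderiv ℝ (fun p : ℝ × V2 => θ p.1 p.2) p (Ed 1)) = 0 := by
    intro p
    have h0 := hθt p.1 p.2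
    have hts : dts2 θ p.1 p.2 = fderiv ℝ (fun p : ℝ × V2 => θ p.1 p.2) p etd :=
      tslice hθ' p.1 p.2
    rw [dotProduct] at h0
    simp only [Fin.sum_univ_two, grad2] at h0
    rw [hts, c1, c1] at h0
    exact h0
  -- differentiate the transport equation in a spatial direction
  have key : ∀ (q v : ℝ × V2),
      fderiv ℝ (fun p : ℝ × V2 => fderiv ℝ (fun p : ℝ × V2 => θ p.1 p.2) p etd) q v
      + (u q.1 q.2 0 * fderiv ℝ (fun p : ℝ × V2 =>
            fderiv ℝ (fun p : ℝ × V2 => θ p.1 p.2) p (Ed 0)) q v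
        + fderiv ℝ (fun p : ℝ × V2 => θ p.1 p.2) q (Ed 0)
            * fderiv ℝ (fun p : ℝ × V2 => u p.1 p.2 0) q v
        + (u q.1 q.2 1 * fderiv ℝ (fun p : ℝ × V2 =>
            fderiv ℝ (fun p : ℝ × V2 => θ p.1 p.2) p (Ed 1)) q v
          + fderiv ℝ (fun p : ℝ × V2 => θ p.1 p.2) q (Ed 1)
              * fderiv ℝ (fun p : ℝ × V2 => u p.1 p.2 1) q v)) = 0 := by
    intro q v
    have hA : HasFDerivAt (fun p : ℝ × V2 => fderiv ℝ (fun p : ℝ × V2 => θ p.1 p.2) p etd)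
        (fderiv ℝ (fun p : ℝ × V2 => fderiv ℝ (fun p : ℝ × V2 => θ p.1 p.2) p etd) q) q :=
      ((dd_smooth hθ' etd).differentiable (by simp) q).hasFDerivAt
    have hG0 : HasFDerivAt (fun p : ℝ × V2 => fderiv ℝ (fun p : ℝ × V2 => θ p.1 p.2) p (Ed 0))
        (fderiv ℝ (fun p : ℝ × V2 => fderiv ℝ (fun p : ℝ × V2 => θ p.1 p.2) p (Ed 0)) q) q :=
      ((dd_smooth hθ' (Ed 0)).differentiable (by simp) q).hasFDerivAt
    have hG1 : HasFDerivAt (fun p : ℝ × V2 => fderiv ℝ (fun p : ℝ × V2 => θ p.1 p.2) p (Ed 1))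
        (fderiv ℝ (fun p : ℝ × V2 => fderiv ℝ (fun p : ℝ × V2 => θ p.1 p.2) p (Ed 1)) q) q :=
      ((dd_smooth hθ' (Ed 1)).differentiable (by simp) q).hasFDerivAt
    have hU0 : HasFDerivAt (fun p : ℝ × V2 => u p.1 p.2 0)
        (fderiv ℝ (fun p : ℝ × V2 => u p.1 p.2 0) q) q :=
      (((hu' 0)).differentiable (by simp) q).hasFDerivAt
    have hU1 : HasFDerivAt (fun p : ℝ × V2 => u p.1 p.2 1)
        (fderiv ℝ (fun p : ℝ × V2 => u p.1 p.2 1) q) q :=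
      (((hu' 1)).differentiable (by simp) q).hasFDerivAt
    have h1 := hA.add (((hU0.mul hG0).add (hU1.mul hG1)))
    have h0 : (fun p : ℝ × V2 =>
        fderiv ℝ (fun p : ℝ × V2 => θ p.1 p.2) p etd
          + ((fun p : ℝ × V2 => u p.1 p.2 0) p
              * fderiv ℝ (fun p : ℝ × V2 => θ p.1 p.2) p (Ed 0)
            + (fun p : ℝ × V2 => u p.1 p.2 1) p
              * fderiv ℝ (fun p : ℝ × V2 => θ p.1 p.2) p (Ed 1)))
        = fun _ => (0 : ℝ) := funext fun p => transport p
    replace h1 : HasFDerivAt (fun _ : ℝ × V2 => (0 : ℝ)) _ q :=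
      h1.congr_of_eventuallyEq (Filter.Eventually.of_forall fun p => (congrFun h0 p).symm)
    have hD := h1.unique (hasFDerivAt_const (0 : ℝ) q)
    have h3 := DFunLike.congr_fun hD v
    simp only [ContinuousLinearMap.add_apply, ContinuousLinearMap.smul_apply,
      ContinuousLinearMap.zero_apply, smul_eq_mul] at h3
    linear_combination h3
  intro t x
  -- values of B in joint form
  have hBs0 : ∀ (s : ℝ) (y : V2),
      B s y 0 = -(fderiv ℝ (fun p : ℝ × V2 => θ p.1 p.2) (s, y) (Ed 1)) := by
    intro s y; rw [hB]
    simp only [Matrix.cons_val_zero]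
    rw [c1]
  have hBs1 : ∀ (s : ℝ) (y : V2),
      B s y 1 = fderiv ℝ (fun p : ℝ × V2 => θ p.1 p.2) (s, y) (Ed 0) := by
    intro s y; rw [hB]
    simp only [Matrix.cons_val_one, Matrix.head_cons, Matrix.cons_val_zero]
    rw [c1]
  -- time derivatives
  have hd1 : deriv (fun s : ℝ =>
        -(fderiv ℝ (fun p : ℝ × V2 => θ p.1 p.2) (s, x) (Ed 1))) t
      = -(fderiv ℝ (fun p : ℝ × V2 =>
          fderiv ℝ (fun p : ℝ × V2 => θ p.1 p.2) p (Ed 1)) (t, x) etd) := by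
    rw [deriv.fun_neg]
    exact congrArg Neg.neg (tslice (dd_smooth hθ' (Ed 1)) t x)
  have hd0 : deriv (fun s : ℝ =>
        fderiv ℝ (fun p : ℝ × V2 => θ p.1 p.2) (s, x) (Ed 0)) t
      = fderiv ℝ (fun p : ℝ × V2 =>
          fderiv ℝ (fun p : ℝ × V2 => θ p.1 p.2) p (Ed 0)) (t, x) etd :=
    tslice (dd_smooth hθ' (Ed 0)) t x
  -- spatial derivatives of B components
  have hp1 : ∀ j : Fin 2, pd2 j (fun y : V2 =>
        -(fderiv ℝ (fun p : ℝ × V2 => θ p.1 p.2) (t, y) (Ed 1))) x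
      = -(fderiv ℝ (fun p : ℝ × V2 =>
          fderiv ℝ (fun p : ℝ × V2 => θ p.1 p.2) p (Ed 1)) (t, x) (Ed j)) := by
    intro j
    have hneg : pd2 j (fun y : V2 =>
          -(fderiv ℝ (fun p : ℝ × V2 => θ p.1 p.2) (t, y) (Ed 1))) x
        = -(pd2 j (fun y : V2 =>
            fderiv ℝ (fun p : ℝ × V2 => θ p.1 p.2) (t, y) (Ed 1)) x) := by
      simp only [pd2, fderiv_fun_neg, ContinuousLinearMap.neg_apply]
    rw [hneg]
    exact congrArg Neg.neg (xslice (dd_smooth hθ' (Ed 1)) t x (Pi.single j 1))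
  have hp0 : ∀ j : Fin 2, pd2 j (fun y : V2 =>
        fderiv ℝ (fun p : ℝ × V2 => θ p.1 p.2) (t, y) (Ed 0)) x
      = fderiv ℝ (fun p : ℝ × V2 =>
          fderiv ℝ (fun p : ℝ × V2 => θ p.1 p.2) p (Ed 0)) (t, x) (Ed j) :=
    fun j => xslice (dd_smooth hθ' (Ed 0)) t x (Pi.single j 1)
  -- divergence-free in joint form
  have hdv : fderiv ℝ (fun p : ℝ × V2 => u p.1 p.2 0) (t, x) (Ed 0)
      + fderiv ℝ (fun p : ℝ × V2 => u p.1 p.2 1) (t, x) (Ed 1) = 0 := by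
    have h := hdiv t x
    simp only [div2, Fin.sum_univ_two] at h
    rw [c2, c2] at h
    exact h
  -- symmetry of second derivatives
  have hs1 : fderiv ℝ (fun p : ℝ × V2 =>
        fderiv ℝ (fun p : ℝ × V2 => θ p.1 p.2) p etd) (t, x) (Ed 1)
      = fderiv ℝ (fun p : ℝ × V2 =>
        fderiv ℝ (fun p : ℝ × V2 => θ p.1 p.2) p (Ed 1)) (t, x) etd :=
    dd_symm hθ' (t, x) etd (Ed 1)
  have hs0 : fderiv ℝ (fun p : ℝ × V2 =>
        fderiv ℝ (fun p : ℝ × V2 => θ p.1 p.2) p etd) (t, x) (Ed 0)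
      = fderiv ℝ (fun p : ℝ × V2 =>
        fderiv ℝ (fun p : ℝ × V2 => θ p.1 p.2) p (Ed 0)) (t, x) etd :=
    dd_symm hθ' (t, x) etd (Ed 0)
  have hs10 : fderiv ℝ (fun p : ℝ × V2 =>
        fderiv ℝ (fun p : ℝ × V2 => θ p.1 p.2) p (Ed 0)) (t, x) (Ed 1)
      = fderiv ℝ (fun p : ℝ × V2 =>
        fderiv ℝ (fun p : ℝ × V2 => θ p.1 p.2) p (Ed 1)) (t, x) (Ed 0) :=
    dd_symm hθ' (t, x) (Ed 0) (Ed 1)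
  funext i
  fin_cases i
  · show dtv2 B t x 0 + adv2 (u t x) (B t) x 0 = adv2 (B t x) (u t) x 0
    simp only [dtv2, adv2, Fin.sum_univ_two]
    simp only [hBs0, hBs1, c2]
    rw [hd1, hp1 0, hp1 1]
    linear_combination (-1) * key (t, x) (Ed 1)
      + fderiv ℝ (fun p : ℝ × V2 => θ p.1 p.2) (t, x) (Ed 1) * hdv
      + hs1 + u t x 0 * hs10
  · show dtv2 B t x 1 + adv2 (u t x) (B t) x 1 = adv2 (B t x) (u t) x 1
    simp only [dtv2, adv2, Fin.sum_univ_two]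
    simp only [hBs0, hBs1, c2]
    rw [hd0, hp0 0, hp0 1]
    linear_combination key (t, x) (Ed 0)
      - fderiv ℝ (fun p : ℝ × V2 => θ p.1 p.2) (t, x) (Ed 0) * hdv
      - hs0 + u t x 1 * hs10
end
end

section
/- (Stretching equation for the curl of the Lamb vector.) Let u, p be smooth fields on ℝ × ℝ³ solving the incompressible Euler equations: div u = 0 and ∂ₜu + (u·∇)u = −∇p. Set ω = curl u, define the Lamb vector 𝒟 = ω × u, the Bernoulli vector E = 𝒟 + ∇(p + ½|u|²), and ϖ = curl E. Then ϖ satisfies ∂ₜϖ − curl(u × ϖ) = curl(E × ω) at every point. -/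
open scoped BigOperators
open Matrix

noncomputable section

/-- Points of `ℝ³`. -/
abbrev V3 := Fin 3 → ℝ

/-- Spatial partial derivative `∂f/∂xᵢ` of a scalar field. -/
def pd (i : Fin 3) (f : V3 → ℝ) (x : V3) : ℝ := fderiv ℝ f x (Pi.single i 1)

/-- Spatial gradient `∇f`. -/
def grad3 (f : V3 → ℝ) (x : V3) : V3 := fun i => pd i f x

/-- Spatial divergence `div u`. -/
def div3 (u : V3 → V3) (x : V3) : ℝ := ∑ i, pd i (fun y => u y i) x

/-- Spatial curl `curl u`. -/
def curl3 (u : V3 → V3) (x : V3) : V3 :=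
  ![pd 1 (fun y => u y 2) x - pd 2 (fun y => u y 1) x,
    pd 2 (fun y => u y 0) x - pd 0 (fun y => u y 2) x,
    pd 0 (fun y => u y 1) x - pd 1 (fun y => u y 0) x]

/-- Directional derivative `(v·∇)w` of a vector field. -/
def adv (v : V3) (w : V3 → V3) (x : V3) : V3 := fun i => ∑ j, v j * pd j (fun y => w y i) x

/-- Spatial Laplacian of a scalar field. -/
def lap3 (f : V3 → ℝ) (x : V3) : ℝ := ∑ i, pd i (fun y => pd i f y) x

/-- Componentwise spatial Laplacian of a vector field. -/
def lapv (u : V3 → V3) (x : V3) : V3 := fun i => lap3 (fun y => u y i) x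

/-- Time derivative `∂ₜf` of a time-dependent scalar field. -/
def dts (f : ℝ → V3 → ℝ) (t : ℝ) (x : V3) : ℝ := deriv (fun s => f s x) t

/-- Time derivative `∂ₜu` of a time-dependent vector field. -/
def dtv (u : ℝ → V3 → V3) (t : ℝ) (x : V3) : V3 := fun i => deriv (fun s => u s x i) t

/-- Smoothness (C∞ jointly in time and space) of a scalar field. -/
def SmoothS (f : ℝ → V3 → ℝ) : Prop := ContDiff ℝ (⊤ : ℕ∞) (fun q : ℝ × V3 => f q.1 q.2)

/-- Smoothness (C∞ jointly in time and space) of a vector field. -/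
def SmoothV (u : ℝ → V3 → V3) : Prop := ContDiff ℝ (⊤ : ℕ∞) (fun q : ℝ × V3 => u q.1 q.2)

/-! ### Auxiliary calculus toolkit -/

theorem symm2 {E' : Type*} [NormedAddCommGroup E'] [NormedSpace ℝ E'] (F : E' → ℝ)
    (hF : ContDiff ℝ (⊤ : ℕ∞) F) (a v w : E') :
    fderiv ℝ (fun q => fderiv ℝ F q w) a v = fderiv ℝ (fun q => fderiv ℝ F q v) a w := by
  have h1 : ContDiff ℝ (⊤ : ℕ∞) (fderiv ℝ F) := hF.fderiv_right (by simp)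
  have hf'' : HasFDerivAt (fderiv ℝ F) (fderiv ℝ (fderiv ℝ F) a) a :=
    (h1.differentiable (by simp) a).hasFDerivAt
  have key : ∀ w v : E', fderiv ℝ (fun q => fderiv ℝ F q w) a v
      = fderiv ℝ (fderiv ℝ F) a v w := by
    intro w v
    have h2 : HasFDerivAt (fun q => fderiv ℝ F q w)
        ((ContinuousLinearMap.apply ℝ ℝ w).comp (fderiv ℝ (fderiv ℝ F) a)) a :=
      (ContinuousLinearMap.apply ℝ ℝ w).hasFDerivAt.comp a hf''
    rw [h2.fderiv]; rfl
  rw [key w v, key v w]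
  exact second_derivative_symmetric (fun y => (hF.differentiable (by simp) y).hasFDerivAt) hf'' v w

theorem pd_slice (F : ℝ × V3 → ℝ) {t : ℝ} {x : V3} (hF : DifferentiableAt ℝ F (t, x)) (i : Fin 3) :
    pd i (fun y => F (t, y)) x = fderiv ℝ F (t, x) (0, Pi.single i 1) := by
  have h : HasFDerivAt (fun y : V3 => (t, y)) (ContinuousLinearMap.inr ℝ ℝ V3) x :=
    hasFDerivAt_prodMk_right t x
  have h2 : HasFDerivAt (fun y => F (t, y))
      ((fderiv ℝ F (t, x)).comp (ContinuousLinearMap.inr ℝ ℝ V3)) x := hF.hasFDerivAt.comp x h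
  rw [pd, h2.fderiv]; rfl

theorem dt_slice (F : ℝ × V3 → ℝ) {t : ℝ} {x : V3} (hF : DifferentiableAt ℝ F (t, x)) :
    deriv (fun s => F (s, x)) t = fderiv ℝ F (t, x) (1, 0) := by
  have h : HasDerivAt (fun s : ℝ => (s, x)) ((1 : ℝ), (0 : V3)) t :=
    (hasDerivAt_id t).prodMk (hasDerivAt_const t x)
  exact (hF.hasFDerivAt.comp_hasDerivAt t h).deriv

theorem fderiv_apply_smooth (F : ℝ × V3 → ℝ) (hF : ContDiff ℝ (⊤ : ℕ∞) F) (v : ℝ × V3) :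
    ContDiff ℝ (⊤ : ℕ∞) (fun q => fderiv ℝ F q v) :=
  (hF.fderiv_right (by simp)).clm_apply contDiff_const

theorem commute_td (F : ℝ × V3 → ℝ) (hF : ContDiff ℝ (⊤ : ℕ∞) F) (i : Fin 3) (t : ℝ) (x : V3) :
    deriv (fun s => pd i (fun y => F (s, y)) x) t
      = pd i (fun y => deriv (fun s => F (s, y)) t) x := by
  have e1 : (fun s => pd i (fun y => F (s, y)) x)
      = fun s => (fun q => fderiv ℝ F q ((0 : ℝ), Pi.single i 1)) (s, x) := by
    funext s; exact pd_slice F (hF.differentiable (by simp) (s, x)) i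
  have e2 : (fun y => deriv (fun s => F (s, y)) t)
      = fun y => (fun q => fderiv ℝ F q ((1 : ℝ), (0 : V3))) (t, y) := by
    funext y; exact dt_slice F (hF.differentiable (by simp) (t, y))
  rw [e1, e2,
    dt_slice _ ((fderiv_apply_smooth F hF _).differentiable (by simp) (t, x)),
    pd_slice _ ((fderiv_apply_smooth F hF _).differentiable (by simp) (t, x)),
    symm2 F hF]

theorem commute_pd (f : V3 → ℝ) (hf : ContDiff ℝ (⊤ : ℕ∞) f) (i j : Fin 3) (x : V3) :
    pd i (fun y => pd j f y) x = pd j (fun y => pd i f y) x :=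
  symm2 f hf x _ _

theorem pd_contDiff (f : V3 → ℝ) (hf : ContDiff ℝ (⊤ : ℕ∞) f) (i : Fin 3) :
    ContDiff ℝ (⊤ : ℕ∞) (fun y => pd i f y) :=
  (hf.fderiv_right (by simp)).clm_apply contDiff_const

theorem pd_add {f g : V3 → ℝ} {x : V3} (hf : DifferentiableAt ℝ f x)
    (hg : DifferentiableAt ℝ g x) (i : Fin 3) :
    pd i (fun y => f y + g y) x = pd i f x + pd i g x := by
  unfold pd; rw [fderiv_fun_add hf hg]; rfl

theorem pd_sub {f g : V3 → ℝ} {x : V3} (hf : DifferentiableAt ℝ f x)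
    (hg : DifferentiableAt ℝ g x) (i : Fin 3) :
    pd i (fun y => f y - g y) x = pd i f x - pd i g x := by
  unfold pd; rw [fderiv_fun_sub hf hg]; rfl

theorem pd_neg {f : V3 → ℝ} {x : V3} (i : Fin 3) :
    pd i (fun y => -f y) x = -pd i f x := by
  unfold pd; rw [fderiv_fun_neg]; rfl

theorem pd_mul {f g : V3 → ℝ} {x : V3} (hf : DifferentiableAt ℝ f x)
    (hg : DifferentiableAt ℝ g x) (i : Fin 3) :
    pd i (fun y => f y * g y) x = f x * pd i g x + pd i f x * g x := by
  unfold pd; rw [fderiv_fun_mul hf hg]; simp; ring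

theorem pd_const_mul {f : V3 → ℝ} {x : V3} (hf : DifferentiableAt ℝ f x) (c : ℝ)
    (i : Fin 3) : pd i (fun y => c * f y) x = c * pd i f x := by
  unfold pd; rw [fderiv_const_mul hf]; rfl

theorem curl3_zero (v : V3 → V3) (x : V3) :
    curl3 v x 0 = pd 1 (fun y => v y 2) x - pd 2 (fun y => v y 1) x := rfl
theorem curl3_one (v : V3 → V3) (x : V3) :
    curl3 v x 1 = pd 2 (fun y => v y 0) x - pd 0 (fun y => v y 2) x := rfl
theorem curl3_two (v : V3 → V3) (x : V3) :
    curl3 v x 2 = pd 0 (fun y => v y 1) x - pd 1 (fun y => v y 0) x := rfl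

/-- stretching equation for the curl of the Lamb vector. -/
theorem stmt11
    (u : ℝ → V3 → V3) (p : ℝ → V3 → ℝ)
    (hu : SmoothV u) (hp : SmoothS p)
    (hdiv : ∀ t x, div3 (u t) x = 0)
    (heuler : ∀ t x, dtv u t x + adv (u t x) (u t) x = -grad3 (p t) x)
    (D E W : ℝ → V3 → V3)
    (hD : ∀ t x, D t x = curl3 (u t) x ⨯₃ u t x)
    (hE : ∀ t x, E t x
      = D t x + grad3 (fun y => p t y + (1 / 2) * (u t y ⬝ᵥ u t y)) x)
    (hW : ∀ t x, W t x = curl3 (E t) x) :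
    ∀ t x, dtv W t x - curl3 (fun y => u t y ⨯₃ W t y) x
      = curl3 (fun y => E t y ⨯₃ curl3 (u t) y) x := by
  have hu' : ContDiff ℝ (⊤ : ℕ∞) (fun q : ℝ × V3 => u q.1 q.2) := hu
  have hp' : ContDiff ℝ (⊤ : ℕ∞) (fun q : ℝ × V3 => p q.1 q.2) := hp
  have hui : ∀ i, ContDiff ℝ (⊤ : ℕ∞) (fun q : ℝ × V3 => u q.1 q.2 i) := fun i => contDiff_pi.mp hu' i
  have hincl : ∀ t : ℝ, ContDiff ℝ (⊤ : ℕ∞) (fun y : V3 => ((t, y) : ℝ × V3)) :=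
    fun t => contDiff_const.prodMk contDiff_id
  have hincl2 : ∀ x : V3, ContDiff ℝ (⊤ : ℕ∞) (fun s : ℝ => ((s, x) : ℝ × V3)) :=
    fun x => contDiff_id.prodMk contDiff_const
  have hux : ∀ t i, ContDiff ℝ (⊤ : ℕ∞) (fun y => u t y i) := fun t i => (hui i).comp (hincl t)
  have hudx : ∀ t i x, DifferentiableAt ℝ (fun y => u t y i) x :=
    fun t i x => (hux t i).differentiable (by simp) x
  have hut : ∀ (x : V3) i, ContDiff ℝ (⊤ : ℕ∞) (fun s => u s x i) := fun x i => (hui i).comp (hincl2 x)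
  have hpx : ∀ t, ContDiff ℝ (⊤ : ℕ∞) (fun y => p t y) := fun t => hp'.comp (hincl t)
  -- joint smoothness of spatial partials of u
  have hpdj : ∀ (j k : Fin 3), ContDiff ℝ (⊤ : ℕ∞) (fun q : ℝ × V3 => pd j (fun y => u q.1 y k) q.2) := by
    intro j k
    have e : (fun q : ℝ × V3 => pd j (fun y => u q.1 y k) q.2)
        = fun q => fderiv ℝ (fun q' : ℝ × V3 => u q'.1 q'.2 k) q (0, Pi.single j 1) := by
      funext q; exact pd_slice _ ((hui k).differentiable (by simp) _) j
    rw [e]; exact fderiv_apply_smooth _ (hui k) _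
  -- joint smoothness of time derivative of u
  have hdtj : ∀ k, ContDiff ℝ (⊤ : ℕ∞) (fun q : ℝ × V3 => deriv (fun s => u s q.2 k) q.1) := by
    intro k
    have e : (fun q : ℝ × V3 => deriv (fun s => u s q.2 k) q.1)
        = fun q => fderiv ℝ (fun q' : ℝ × V3 => u q'.1 q'.2 k) q (1, 0) := by
      funext q; exact dt_slice _ ((hui k).differentiable (by simp) _)
    rw [e]; exact fderiv_apply_smooth _ (hui k) _
  have hdtux : ∀ t k, ContDiff ℝ (⊤ : ℕ∞) (fun y => deriv (fun s => u s y k) t) :=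
    fun t k => (hdtj k).comp (hincl t)
  -- joint smoothness of curl components
  have hωj : ∀ i, ContDiff ℝ (⊤ : ℕ∞) (fun q : ℝ × V3 => curl3 (u q.1) q.2 i) := by
    intro i
    fin_cases i <;> simp only [Fin.zero_eta, Fin.mk_one, Fin.reduceFinMk]
    · exact (hpdj 1 2).sub (hpdj 2 1)
    · exact (hpdj 2 0).sub (hpdj 0 2)
    · exact (hpdj 0 1).sub (hpdj 1 0)
  have hωx : ∀ t i, ContDiff ℝ (⊤ : ℕ∞) (fun y => curl3 (u t) y i) := fun t i => (hωj i).comp (hincl t)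
  have hωt : ∀ (x : V3) i, ContDiff ℝ (⊤ : ℕ∞) (fun s => curl3 (u s) x i) :=
    fun x i => (hωj i).comp (hincl2 x)
  -- joint smoothness of time derivative of curl components
  have hdtωj : ∀ k, ContDiff ℝ (⊤ : ℕ∞) (fun q : ℝ × V3 => deriv (fun s => curl3 (u s) q.2 k) q.1) := by
    intro k
    have e : (fun q : ℝ × V3 => deriv (fun s => curl3 (u s) q.2 k) q.1)
        = fun q => fderiv ℝ (fun q' : ℝ × V3 => curl3 (u q'.1) q'.2 k) q (1, 0) := by
      funext q; exact dt_slice _ ((hωj k).differentiable (by simp) _)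
    rw [e]; exact fderiv_apply_smooth _ (hωj k) _
  have hdtωx : ∀ t k, ContDiff ℝ (⊤ : ℕ∞) (fun y => deriv (fun s => curl3 (u s) y k) t) :=
    fun t k => (hdtωj k).comp (hincl t)
  -- joint smoothness of (u × ω) components
  have hgj : ∀ b, ContDiff ℝ (⊤ : ℕ∞) (fun q : ℝ × V3 => (u q.1 q.2 ⨯₃ curl3 (u q.1) q.2) b) := by
    intro b
    have hc : ∀ (b : Fin 3) (β γ : Fin 3),
        ContDiff ℝ (⊤ : ℕ∞) (fun q : ℝ × V3 =>
          u q.1 q.2 β * curl3 (u q.1) q.2 γ - u q.1 q.2 γ * curl3 (u q.1) q.2 β) :=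
      fun b β γ => ((hui β).mul (hωj γ)).sub ((hui γ).mul (hωj β))
    fin_cases b <;> simp only [Fin.zero_eta, Fin.mk_one, Fin.reduceFinMk]
    · exact hc 0 1 2
    · exact hc 1 2 0
    · exact hc 2 0 1
  -- smoothness, in time, of spatial partials of (u × ω) components
  have hpdgt : ∀ (a b : Fin 3) (x : V3),
      ContDiff ℝ (⊤ : ℕ∞) (fun s => pd a (fun y => (u s y ⨯₃ curl3 (u s) y) b) x) := by
    intro a b x
    have e : (fun s => pd a (fun y => (u s y ⨯₃ curl3 (u s) y) b) x)
        = fun s => fderiv ℝ (fun q' : ℝ × V3 => (u q'.1 q'.2 ⨯₃ curl3 (u q'.1) q'.2) b)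
            (s, x) (0, Pi.single a 1) := by
      funext s; exact pd_slice _ ((hgj b).differentiable (by simp) _) a
    rw [e]; exact (fderiv_apply_smooth _ (hgj b) _).comp (hincl2 x)
  -- Euler equation, componentwise
  have heul : ∀ t x i, deriv (fun s => u s x i) t
      = -pd i (p t) x - (u t x 0 * pd 0 (fun y => u t y i) x
        + u t x 1 * pd 1 (fun y => u t y i) x + u t x 2 * pd 2 (fun y => u t y i) x) := by
    intro t x i
    have h := congrFun (heuler t x) i
    simp only [dtv, adv, grad3, Fin.sum_univ_three, Pi.add_apply, Pi.neg_apply] at h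
    linarith
  -- the Bernoulli gradient
  have hB : ∀ t x i, pd i (fun y => p t y + 1 / 2 * (u t y ⬝ᵥ u t y)) x
      = pd i (p t) x + (u t x 0 * pd i (fun y => u t y 0) x
        + u t x 1 * pd i (fun y => u t y 1) x + u t x 2 * pd i (fun y => u t y 2) x) := by
    intro t x i
    have e : (fun y => p t y + 1 / 2 * (u t y ⬝ᵥ u t y))
        = fun y => p t y + 1 / 2 * (u t y 0 * u t y 0 + u t y 1 * u t y 1 + u t y 2 * u t y 2) := by
      funext y; simp [dotProduct, Fin.sum_univ_three]
    have d0 := hudx t 0 x; have d1 := hudx t 1 x; have d2 := hudx t 2 x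
    have dsq : DifferentiableAt ℝ
        (fun y => u t y 0 * u t y 0 + u t y 1 * u t y 1 + u t y 2 * u t y 2) x :=
      ((d0.mul d0).add (d1.mul d1)).add (d2.mul d2)
    rw [e, pd_add ((hpx t).differentiable (by simp) x) (dsq.const_mul _),
      pd_const_mul dsq, pd_add ((d0.fun_mul d0).fun_add (d1.fun_mul d1)) (d2.fun_mul d2),
      pd_add (d0.fun_mul d0) (d1.fun_mul d1), pd_mul d0 d0, pd_mul d1 d1, pd_mul d2 d2]
    ring
  -- E = -∂ₜu
  have hEu : ∀ t x i, E t x i = -deriv (fun s => u s x i) t := by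
    intro t x i
    rw [congrFun (hE t x) i, Pi.add_apply, congrFun (hD t x) i]
    have hg : grad3 (fun y => p t y + 1 / 2 * (u t y ⬝ᵥ u t y)) x i
        = pd i (fun y => p t y + 1 / 2 * (u t y ⬝ᵥ u t y)) x := rfl
    rw [hg, hB t x i, heul t x i]
    fin_cases i <;>
      simp [cross_apply, curl3_zero, curl3_one, curl3_two, curl3] <;> ring
  -- W = -∂ₜω
  have hWd : ∀ t x i, W t x i = -deriv (fun s => curl3 (u s) x i) t := by
    intro t x i
    rw [hW]
    have hE2 : ∀ k : Fin 3, (fun y => E t y k) = fun y => -deriv (fun s => u s y k) t :=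
      fun k => funext fun y => hEu t y k
    have hdd : ∀ (j k : Fin 3), DifferentiableAt ℝ (fun s => pd j (fun y => u s y k) x) t := by
      intro j k
      have e : (fun s => pd j (fun y => u s y k) x)
          = fun s => (fun q : ℝ × V3 => pd j (fun y => u q.1 y k) q.2) (s, x) := rfl
      rw [e]
      exact ((hpdj j k).comp (hincl2 x)).differentiable (by simp) t
    fin_cases i <;> simp only [Fin.zero_eta, Fin.mk_one, Fin.reduceFinMk]
    · simp only [curl3_zero, curl3_one, curl3_two]
      rw [hE2 2, hE2 1, pd_neg, pd_neg,
        commute_td _ (hui 2) 1 t x |>.symm, commute_td _ (hui 1) 2 t x |>.symm,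
        deriv_fun_sub (hdd 1 2) (hdd 2 1)]
      ring
    · simp only [curl3_zero, curl3_one, curl3_two]
      rw [hE2 0, hE2 2, pd_neg, pd_neg,
        commute_td _ (hui 0) 2 t x |>.symm, commute_td _ (hui 2) 0 t x |>.symm,
        deriv_fun_sub (hdd 2 0) (hdd 0 2)]
      ring
    · simp only [curl3_zero, curl3_one, curl3_two]
      rw [hE2 1, hE2 0, pd_neg, pd_neg,
        commute_td _ (hui 1) 0 t x |>.symm, commute_td _ (hui 0) 1 t x |>.symm,
        deriv_fun_sub (hdd 0 1) (hdd 1 0)]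
      ring
  -- D = -(u × ω) pointwise (as scalar components)
  have hDneg : ∀ t (k : Fin 3), (fun y => D t y k)
      = fun y => -((u t y ⨯₃ curl3 (u t) y) k) := by
    intro t k
    funext y
    rw [hD t y, ← cross_anticomm]
    simp
  -- differentiability of (u×ω) components in space
  have hgx : ∀ t b, ContDiff ℝ (⊤ : ℕ∞) (fun y => (u t y ⨯₃ curl3 (u t) y) b) :=
    fun t b => (hgj b).comp (hincl t)
  -- smoothness of the Bernoulli function
  have hBx : ∀ t, ContDiff ℝ (⊤ : ℕ∞) (fun y => p t y + 1 / 2 * (u t y ⬝ᵥ u t y)) := by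
    intro t
    have e : (fun y => p t y + 1 / 2 * (u t y ⬝ᵥ u t y))
        = fun y => p t y + 1 / 2 * (u t y 0 * u t y 0 + u t y 1 * u t y 1 + u t y 2 * u t y 2) := by
      funext y; simp [dotProduct, Fin.sum_univ_three]
    rw [e]
    exact (hpx t).add (contDiff_const.mul ((((hux t 0).mul (hux t 0)).add
      ((hux t 1).mul (hux t 1))).add ((hux t 2).mul (hux t 2))))
  -- the vorticity equation: ∂ₜω = curl (u × ω)
  have hvort : ∀ t x (i : Fin 3), deriv (fun s => curl3 (u s) x i) t
      = curl3 (fun y => u t y ⨯₃ curl3 (u t) y) x i := by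
    intro t x i
    have h1 : deriv (fun s => curl3 (u s) x i) t = -(W t x i) := by rw [hWd t x i]; ring
    rw [h1, hW]
    have hEc : ∀ k : Fin 3, (fun y => E t y k)
        = fun y => -((u t y ⨯₃ curl3 (u t) y) k)
          + pd k (fun z => p t z + 1 / 2 * (u t z ⬝ᵥ u t z)) y := by
      intro k
      funext y
      rw [congrFun (hE t y) k, Pi.add_apply, congrFun (hDneg t k) y]
      rfl
    have hdg : ∀ b y, DifferentiableAt ℝ (fun z => -((u t z ⨯₃ curl3 (u t) z) b)) y :=
      fun b y => ((hgx t b).differentiable (by simp) y).neg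
    have hdB : ∀ (k : Fin 3) y, DifferentiableAt ℝ
        (fun z => pd k (fun z' => p t z' + 1 / 2 * (u t z' ⬝ᵥ u t z')) z) y :=
      fun k y => (pd_contDiff _ (hBx t) k).differentiable (by simp) y
    fin_cases i <;> simp only [Fin.zero_eta, Fin.mk_one, Fin.reduceFinMk]
    · rw [curl3_zero, curl3_zero, hEc 2, hEc 1,
        pd_add (hdg 2 x) (hdB 2 x), pd_add (hdg 1 x) (hdB 1 x),
        pd_neg, pd_neg, commute_pd _ (hBx t) 1 2 x]
      ring
    · rw [curl3_one, curl3_one, hEc 0, hEc 2,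
        pd_add (hdg 0 x) (hdB 0 x), pd_add (hdg 2 x) (hdB 2 x),
        pd_neg, pd_neg, commute_pd _ (hBx t) 2 0 x]
      ring
    · rw [curl3_two, curl3_two, hEc 1, hEc 0,
        pd_add (hdg 1 x) (hdB 1 x), pd_add (hdg 0 x) (hdB 0 x),
        pd_neg, pd_neg, commute_pd _ (hBx t) 0 1 x]
      ring
  -- time derivative of (u × ω) components
  have hdtg : ∀ t (x : V3) (b : Fin 3), deriv (fun s => (u s x ⨯₃ curl3 (u s) x) b) t
      = ((fun k => deriv (fun s => u s x k) t) ⨯₃ curl3 (u t) x) b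
        + (u t x ⨯₃ (fun k => deriv (fun s => curl3 (u s) x k) t)) b := by
    intro t x b
    have du : ∀ k, DifferentiableAt ℝ (fun s => u s x k) t :=
      fun k => (hut x k).differentiable (by simp) t
    have dω : ∀ k, DifferentiableAt ℝ (fun s => curl3 (u s) x k) t :=
      fun k => (hωt x k).differentiable (by simp) t
    fin_cases b <;> simp only [Fin.zero_eta, Fin.mk_one, Fin.reduceFinMk] <;>
    · simp only [cross_apply, Matrix.cons_val_zero, Matrix.cons_val_one, Matrix.head_cons,
        Matrix.cons_val_two, Matrix.tail_cons]
      rw [deriv_fun_sub ((du _).fun_mul (dω _)) ((du _).fun_mul (dω _)),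
        deriv_fun_mul (du _) (dω _), deriv_fun_mul (du _) (dω _)]
      ring
  -- main computation
  intro t x
  funext i
  rw [Pi.sub_apply]
  have hdtvW : dtv W t x i = deriv (fun s => W s x i) t := rfl
  have hWs : (fun s => W s x i) = fun s => -(curl3 (fun y => u s y ⨯₃ curl3 (u s) y) x i) := by
    funext s; rw [hWd s x i, hvort s x i]
  -- rewrite the second LHS term: u × W = -(u × ∂ₜω)
  have hWneg : (fun y => u t y ⨯₃ W t y)
      = fun y => -(u t y ⨯₃ (fun k => deriv (fun s => curl3 (u s) y k) t)) := by
    funext y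
    have : W t y = -(fun k => deriv (fun s => curl3 (u s) y k) t) := by
      funext k; rw [hWd t y k]; rfl
    rw [this, map_neg]
  -- rewrite the RHS: E × ω = -(∂ₜu × ω)
  have hEneg : (fun y => E t y ⨯₃ curl3 (u t) y)
      = fun y => -((fun k => deriv (fun s => u s y k) t) ⨯₃ curl3 (u t) y) := by
    funext y
    have : E t y = -(fun k => deriv (fun s => u s y k) t) := by
      funext k; rw [hEu t y k]; rfl
    rw [this, map_neg, LinearMap.neg_apply]
  rw [hdtvW, hWs, hWneg, hEneg]
  -- differentiability facts for A and B components
  have hAx : ∀ b y, DifferentiableAt ℝ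
      (fun z => ((fun k => deriv (fun s => u s z k) t) ⨯₃ curl3 (u t) z) b) y := by
    intro b y
    fin_cases b <;> simp only [Fin.zero_eta, Fin.mk_one, Fin.reduceFinMk] <;>
    · simp only [cross_apply, Matrix.cons_val_zero, Matrix.cons_val_one, Matrix.head_cons,
        Matrix.cons_val_two, Matrix.tail_cons]
      exact ((((hdtux t _).differentiable (by simp) y).mul
        ((hωx t _).differentiable (by simp) y)).sub
        (((hdtux t _).differentiable (by simp) y).mul ((hωx t _).differentiable (by simp) y)))
  have hBx' : ∀ b y, DifferentiableAt ℝ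
      (fun z => (u t z ⨯₃ (fun k => deriv (fun s => curl3 (u s) z k) t)) b) y := by
    intro b y
    fin_cases b <;> simp only [Fin.zero_eta, Fin.mk_one, Fin.reduceFinMk] <;>
    · simp only [cross_apply, Matrix.cons_val_zero, Matrix.cons_val_one, Matrix.head_cons,
        Matrix.cons_val_two, Matrix.tail_cons]
      exact ((((hux t _).differentiable (by simp) y).mul
        ((hdtωx t _).differentiable (by simp) y)).sub
        (((hux t _).differentiable (by simp) y).mul ((hdtωx t _).differentiable (by simp) y)))
  have hpdd : ∀ (a b : Fin 3), DifferentiableAt ℝ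
      (fun s => pd a (fun y => (u s y ⨯₃ curl3 (u s) y) b) x) t :=
    fun a b => (hpdgt a b x).differentiable (by simp) t
  have hcom : ∀ (a b : Fin 3), deriv (fun s => pd a (fun y => (u s y ⨯₃ curl3 (u s) y) b) x) t
      = pd a (fun y => deriv (fun s => (u s y ⨯₃ curl3 (u s) y) b) t) x :=
    fun a b => commute_td _ (hgj b) a t x
  have hsplit : ∀ (a b : Fin 3), pd a (fun y => deriv (fun s => (u s y ⨯₃ curl3 (u s) y) b) t) x
      = pd a (fun y => ((fun k => deriv (fun s => u s y k) t) ⨯₃ curl3 (u t) y) b) x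
        + pd a (fun y => (u t y ⨯₃ (fun k => deriv (fun s => curl3 (u s) y k) t)) b) x := by
    intro a b
    have e : (fun y => deriv (fun s => (u s y ⨯₃ curl3 (u s) y) b) t)
        = fun y => ((fun k => deriv (fun s => u s y k) t) ⨯₃ curl3 (u t) y) b
          + (u t y ⨯₃ (fun k => deriv (fun s => curl3 (u s) y k) t)) b := by
      funext y; exact hdtg t y b
    rw [e, pd_add (hAx b x) (hBx' b x)]
  -- negated-field curls
  have hpdneg : ∀ (a : Fin 3) (h : V3 → V3) (b : Fin 3),
      pd a (fun y => (-(h y)) b) x = -pd a (fun y => h y b) x := by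
    intro a h b
    have e : (fun y => (-(h y)) b) = fun y => -(h y b) := by funext y; rfl
    rw [e, pd_neg]
  fin_cases i <;> simp only [Fin.zero_eta, Fin.mk_one, Fin.reduceFinMk]
  · simp only [curl3_zero, curl3_one, curl3_two]
    rw [hpdneg, hpdneg, hpdneg, hpdneg,
      deriv.fun_neg, deriv_fun_sub (hpdd 1 2) (hpdd 2 1), hcom 1 2, hcom 2 1,
      hsplit 1 2, hsplit 2 1]
    ring
  · simp only [curl3_zero, curl3_one, curl3_two]
    rw [hpdneg, hpdneg, hpdneg, hpdneg,
      deriv.fun_neg, deriv_fun_sub (hpdd 2 0) (hpdd 0 2), hcom 2 0, hcom 0 2,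
      hsplit 2 0, hsplit 0 2]
    ring
  · simp only [curl3_zero, curl3_one, curl3_two]
    rw [hpdneg, hpdneg, hpdneg, hpdneg,
      deriv.fun_neg, deriv_fun_sub (hpdd 0 1) (hpdd 1 0), hcom 0 1, hcom 1 0,
      hsplit 0 1, hsplit 1 0]
    ring
end
end
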